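/- arXiv:2512.14125 — 3 statements merged into one kernel-verified Lean document; each statement's English description precedes it below -/
import Mathlib

section
/- For m ≥ 2 let ℤ_m denote the cyclic subgroup of SU(2) generated by diag(e^{2πi/m}, e^{−2πi/m}), acting on bilinear forms by pullback. If m ≥ 3 then (V⁻)^{ℤ_m} = ℝ·ω₁⁻ (the invariant anti-self-dual forms are exactly the real multiples of ω₁⁻), while for m = 2 (so ℤ₂ = {±I}) one has (V⁻)^{ℤ₂} = V⁻. -/
open Complex

/-- The standard anti-self-dual 2-form `ω₁⁻(u,v) = Im(conj u₁ · v₁) − Im(conj u₂ · v₂)` on `ℂ²`. -/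
noncomputable def omegaMinus1 (u v : Fin 2 → ℂ) : ℝ :=
  ((starRingEnd ℂ) (u 0) * v 0).im - ((starRingEnd ℂ) (u 1) * v 1).im

/-- The standard anti-self-dual 2-form `ω₂⁻(u,v) = Re(conj u₁ · v₂) − Re(conj u₂ · v₁)` on `ℂ²`. -/
noncomputable def omegaMinus2 (u v : Fin 2 → ℂ) : ℝ :=
  ((starRingEnd ℂ) (u 0) * v 1).re - ((starRingEnd ℂ) (u 1) * v 0).re

/-- The standard anti-self-dual 2-form `ω₃⁻(u,v) = Im(conj u₁ · v₂) + Im(conj u₂ · v₁)` on `ℂ²`. -/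
noncomputable def omegaMinus3 (u v : Fin 2 → ℂ) : ℝ :=
  ((starRingEnd ℂ) (u 0) * v 1).im + ((starRingEnd ℂ) (u 1) * v 0).im

/-- `V⁻`: the real span of `ω₁⁻, ω₂⁻, ω₃⁻`. -/
noncomputable def Vminus : Set ((Fin 2 → ℂ) → (Fin 2 → ℂ) → ℝ) :=
  {α | ∃ a b c : ℝ, α = fun u v =>
    a * omegaMinus1 u v + b * omegaMinus2 u v + c * omegaMinus3 u v}

/-- The generator `diag(e^{2πi/m}, e^{−2πi/m})` of the cyclic subgroup `ℤ_m ⊂ SU(2)`. -/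
noncomputable def cyclicGen (m : ℕ) : Matrix (Fin 2) (Fin 2) ℂ :=
  !![Complex.exp (2 * Real.pi * Complex.I / m), 0;
     0, Complex.exp (-(2 * Real.pi * Complex.I) / m)]

/-- A 2-form is `ℤ_m`-invariant iff it is invariant under pullback by every power of the
generator `diag(e^{2πi/m}, e^{−2πi/m})` (these powers exhaust the cyclic subgroup `ℤ_m`). -/
def ZmInvariant (m : ℕ) (α : (Fin 2 → ℂ) → (Fin 2 → ℂ) → ℝ) : Prop :=
  ∀ (k : ℕ) (u v : Fin 2 → ℂ),
    α ((cyclicGen m ^ k).mulVec u) ((cyclicGen m ^ k).mulVec v) = α u v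

noncomputable def genE (m : ℕ) : ℂ := Complex.exp (2 * Real.pi * Complex.I / m)
noncomputable def genE' (m : ℕ) : ℂ := Complex.exp (-(2 * Real.pi * Complex.I) / m)

lemma conj_genE (m : ℕ) : (starRingEnd ℂ) (genE m) = genE' m := by
  unfold genE genE'
  rw [← Complex.exp_conj]
  congr 1
  simp [map_div₀, Complex.conj_I, map_ofNat]

lemma conj_genE' (m : ℕ) : (starRingEnd ℂ) (genE' m) = genE m := by
  unfold genE genE'
  rw [← Complex.exp_conj]
  congr 1
  simp [map_div₀, Complex.conj_I, map_ofNat]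

lemma genE'_mul_genE (m : ℕ) : genE' m * genE m = 1 := by
  unfold genE genE'
  rw [← Complex.exp_add]
  rw [show -(2 * (Real.pi:ℂ) * Complex.I) / m + 2 * (Real.pi:ℂ) * Complex.I / m = 0 by ring,
    Complex.exp_zero]

lemma genE_mul_genE' (m : ℕ) : genE m * genE' m = 1 := by
  rw [mul_comm]; exact genE'_mul_genE m

lemma gen_mulVec (m : ℕ) (u : Fin 2 → ℂ) :
    (cyclicGen m).mulVec u = ![genE m * u 0, genE' m * u 1] := by
  funext i
  fin_cases i <;>
    simp [cyclicGen, genE, genE', Matrix.mulVec, dotProduct, Fin.sum_univ_two]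

lemma ZmInvariant_of_gen {m : ℕ} {α : (Fin 2 → ℂ) → (Fin 2 → ℂ) → ℝ}
    (h : ∀ u v, α ((cyclicGen m).mulVec u) ((cyclicGen m).mulVec v) = α u v) :
    ZmInvariant m α := by
  intro k
  induction k with
  | zero => intro u v; rw [pow_zero, Matrix.one_mulVec, Matrix.one_mulVec]
  | succ n ih =>
    intro u v
    rw [pow_succ, ← Matrix.mulVec_mulVec, ← Matrix.mulVec_mulVec, ih, h]

lemma omega1_gen (m : ℕ) (u v : Fin 2 → ℂ) :
    omegaMinus1 ((cyclicGen m).mulVec u) ((cyclicGen m).mulVec v) = omegaMinus1 u v := by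
  rw [gen_mulVec, gen_mulVec]
  unfold omegaMinus1
  simp only [Matrix.cons_val_zero, Matrix.cons_val_one, Matrix.head_cons, map_mul,
    conj_genE, conj_genE']
  rw [show genE' m * (starRingEnd ℂ) (u 0) * (genE m * v 0)
      = (genE' m * genE m) * ((starRingEnd ℂ) (u 0) * v 0) by ring,
    show genE m * (starRingEnd ℂ) (u 1) * (genE' m * v 1)
      = (genE m * genE' m) * ((starRingEnd ℂ) (u 1) * v 1) by ring,
    genE'_mul_genE, genE_mul_genE', one_mul, one_mul]

/-- **Invariant anti-self-dual forms for the cyclic groups `ℤ_m`.** For `m ≥ 3`, the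
`ℤ_m`-invariant elements of `V⁻` are exactly the real multiples of `ω₁⁻`; for `m = 2`
(so `ℤ₂ = {±1}`), every element of `V⁻` is invariant. -/
theorem Vminus_invariants_of_cyclic (m : ℕ) (hm : 2 ≤ m) :
    (3 ≤ m →
      {α ∈ Vminus | ZmInvariant m α}
        = {α | ∃ c : ℝ, α = fun u v => c * omegaMinus1 u v}) ∧
    (m = 2 → {α ∈ Vminus | ZmInvariant m α} = Vminus) := by
  constructor
  · intro h3
    ext α
    simp only [Set.mem_sep_iff, Set.mem_setOf_eq, Vminus]
    constructor
    · rintro ⟨⟨a, b, c, rfl⟩, hinv⟩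
      set θ : ℝ := 4 * Real.pi / m with hθdef
      have hm0 : (m : ℝ) ≠ 0 := by positivity
      have hEE : (starRingEnd ℂ) (genE m) * genE' m = Complex.exp ((-θ : ℝ) * Complex.I) := by
        rw [conj_genE]
        unfold genE'
        rw [← Complex.exp_add]
        congr 1
        rw [hθdef]
        push_cast
        ring
      have hinv1 := hinv 1
      simp only [pow_one] at hinv1
      have e1 := hinv1 ![1, 0] ![0, 1]
      have e2 := hinv1 ![1, 0] ![0, Complex.I]
      rw [gen_mulVec, gen_mulVec] at e1
      rw [gen_mulVec, gen_mulVec] at e2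
      simp only [omegaMinus1, omegaMinus2, omegaMinus3, Matrix.cons_val_zero,
        Matrix.cons_val_one, Matrix.head_cons, mul_zero, mul_one, map_zero, map_one,
        zero_mul, one_mul, ← mul_assoc, hEE, Complex.exp_ofReal_mul_I_re,
        Complex.exp_ofReal_mul_I_im, Real.cos_neg, Real.sin_neg, Complex.mul_I_re,
        Complex.mul_I_im, Complex.zero_re, Complex.zero_im, Complex.one_re,
        Complex.one_im, Complex.I_re, Complex.I_im, sub_zero, zero_sub, add_zero,
        zero_add, neg_neg, neg_zero] at e1 e2
      have hθpos : 0 < θ := by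
        rw [hθdef]
        positivity
      have hθlt : θ < 2 * Real.pi := by
        rw [hθdef, div_lt_iff₀ (by positivity)]
        have : (3 : ℝ) ≤ m := by exact_mod_cast h3
        nlinarith [Real.pi_pos]
      have hcos : Real.cos θ < 1 := by
        rcases lt_or_eq_of_le (Real.cos_le_one θ) with h | h
        · exact h
        · exfalso
          have := (Real.cos_eq_one_iff_of_lt_of_lt (by linarith) hθlt).mp h
          linarith
      have pyth := Real.sin_sq_add_cos_sq θ
      set C := Real.cos θ
      set S := Real.sin θ
      have hc : c = 0 := by
        have h2 : c * (2 * (1 - C)) = 0 := by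
          linear_combination (-S) * e1 + (C - 1) * e2 + (-c) * pyth
        rcases mul_eq_zero.mp h2 with h | h
        · exact h
        · linarith
      have hb : b = 0 := by
        rw [hc] at e1
        have h2 : b * (1 - C) = 0 := by linear_combination (-1 : ℝ) * e1
        rcases mul_eq_zero.mp h2 with h | h
        · exact h
        · linarith
      refine ⟨a, ?_⟩
      funext u v
      rw [hb, hc]
      ring
    · rintro ⟨c, rfl⟩
      refine ⟨⟨c, 0, 0, by funext u v; ring⟩, ?_⟩
      apply ZmInvariant_of_gen
      intro u v
      rw [omega1_gen]
  · intro h2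
    subst h2
    ext α
    simp only [Set.mem_sep_iff]
    constructor
    · exact fun h => h.1
    · intro hα
      refine ⟨hα, ?_⟩
      obtain ⟨a, b, c, rfl⟩ := hα
      have hE2 : genE 2 = -1 := by
        unfold genE
        rw [show 2 * (Real.pi:ℂ) * Complex.I / (2:ℕ) = Real.pi * Complex.I by push_cast; ring]
        exact Complex.exp_pi_mul_I
      have hE2' : genE' 2 = -1 := by
        rw [← conj_genE, hE2]
        simp
      apply ZmInvariant_of_gen
      intro u v
      rw [gen_mulVec, gen_mulVec, hE2, hE2']
      simp [omegaMinus1, omegaMinus2, omegaMinus3, neg_one_mul, map_neg, neg_mul,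
        mul_neg, neg_neg]
end

section
/- Let u : ℝ⁴ ∖ {0} → ℝ be smooth and harmonic, i.e. its Laplacian (the trace of the Hessian, Δu = Σ_{j=1}^4 ∂²u/∂x_j²) vanishes identically on ℝ⁴ ∖ {0}. Suppose there are constants C > 0 and δ with −2 < δ < 0 such that |u(x)| ≤ C‖x‖^δ for all x ≠ 0. Then u is identically zero. (This Liouville-type claim, combining removability of the singularity at 0 with decay at infinity, is the key step in the uniform invertibility of the Laplacian on weighted Hölder spaces with weight δ ∈ (−2,0).) -/
open Set

/-- One-sided second derivative test at a local max. -/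
lemma secondDerivTest {φ φ' : ℝ → ℝ} {A c : ℝ} (hc : 0 < c)
    (hφ : ∀ t ∈ Ioo (-c) c, HasDerivAt φ (φ' t) t)
    (hA : HasDerivAt φ' A 0) (hmax : IsLocalMax φ 0) : A ≤ 0 := by
  by_contra h
  push_neg at h
  have h0 : φ' 0 = 0 := by
    have hd := hmax.deriv_eq_zero
    rwa [(hφ 0 ⟨by linarith, hc⟩).deriv] at hd
  have hslope : Filter.Tendsto (fun t => φ' t / t) (nhdsWithin 0 {(0:ℝ)}ᶜ) (nhds A) := by
    have := hasDerivAt_iff_tendsto_slope.mp hA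
    simpa [slope_fun_def, h0, div_eq_inv_mul] using this
  have hev : ∀ᶠ t in nhdsWithin (0:ℝ) (Ioi 0),
      0 < φ' t / t ∧ t < c ∧ φ t ≤ φ 0 := by
    have h1 : ∀ᶠ t in nhdsWithin (0:ℝ) (Ioi 0), 0 < φ' t / t :=
      (hslope.eventually (eventually_gt_nhds h)).filter_mono
        (nhdsWithin_mono 0 (fun x hx => ne_of_gt hx))
    have h2 : ∀ᶠ t in nhdsWithin (0:ℝ) (Ioi 0), t < c :=
      eventually_nhdsWithin_of_eventually_nhds (eventually_lt_nhds hc)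
    have h3 : ∀ᶠ t in nhdsWithin (0:ℝ) (Ioi 0), φ t ≤ φ 0 :=
      eventually_nhdsWithin_of_eventually_nhds hmax
    filter_upwards [h1, h2, h3] with t a b cc using ⟨a, b, cc⟩
  obtain ⟨η, hη, hsub⟩ := mem_nhdsGT_iff_exists_Ioo_subset.mp hev
  have hη0 : (0:ℝ) < η := hη
  set b := η / 2 with hb
  have hbmem : b ∈ Ioo (0:ℝ) η := ⟨by positivity, by simp [hb]; linarith⟩
  have hbc : b < c := (hsub hbmem).2.1
  have hmono : StrictMonoOn φ (Icc 0 b) := by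
    apply strictMonoOn_of_deriv_pos (convex_Icc 0 b)
    · intro t ht
      have htc : t ∈ Ioo (-c) c := ⟨by linarith [ht.1], by linarith [ht.2, hbc]⟩
      exact (hφ t htc).continuousAt.continuousWithinAt
    · intro t ht
      rw [interior_Icc] at ht
      have htm : t ∈ Ioo (0:ℝ) η := ⟨ht.1, by linarith [ht.2, hbmem.2]⟩
      have hsl := (hsub htm).1
      have htc : t ∈ Ioo (-c) c := ⟨by linarith [ht.1], by linarith [(hsub htm).2.1]⟩
      rw [(hφ t htc).deriv]
      have : φ' t = (φ' t / t) * t := by field_simp [ne_of_gt ht.1]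
      rw [this]
      exact mul_pos hsl ht.1
  have hlt : φ 0 < φ b :=
    hmono (left_mem_Icc.mpr (by positivity)) (right_mem_Icc.mpr (by positivity)) hbmem.1
  exact absurd (hsub hbmem).2.2 (not_le.mpr hlt)


lemma norm_line (x : EuclideanSpace ℝ (Fin 4)) (j : Fin 4) (t : ℝ) :
    ‖x + t • EuclideanSpace.single j (1:ℝ)‖^2 = ‖x‖^2 + 2*(x j)*t + t^2 := by
  rw [norm_add_sq_real, real_inner_smul_right, norm_smul, EuclideanSpace.norm_single]
  have : (inner ℝ x (EuclideanSpace.single j (1:ℝ)) : ℝ) = x j := by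
    rw [EuclideanSpace.inner_single_right]; simp
  rw [this]
  simp [Real.norm_eq_abs, mul_pow, sq_abs]
  ring

lemma sum_sq (x : EuclideanSpace ℝ (Fin 4)) : ∑ j, (x j)^2 = ‖x‖^2 := by
  rw [EuclideanSpace.norm_eq, Real.sq_sqrt (by positivity)]
  simp [Real.norm_eq_abs, sq_abs]


lemma comparison (u : EuclideanSpace ℝ (Fin 4) → ℝ)
    (hs : ContDiffOn ℝ 2 u {y : EuclideanSpace ℝ (Fin 4) | y ≠ 0})
    (hh : ∀ x : EuclideanSpace ℝ (Fin 4), x ≠ 0 →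
      ∑ j : Fin 4, fderiv ℝ (fderiv ℝ u) x (EuclideanSpace.single j (1:ℝ))
        (EuclideanSpace.single j (1:ℝ)) = 0)
    (r R ε σ : ℝ) (hr : 0 < r) (hrR : r ≤ R) (hε : 0 < ε) (hσ : 0 < σ)
    (hbd1 : ∀ y : EuclideanSpace ℝ (Fin 4), ‖y‖ = r → u y ≤ ε * (‖y‖^2)⁻¹ + ε)
    (hbd2 : ∀ y : EuclideanSpace ℝ (Fin 4), ‖y‖ = R → u y ≤ ε) :
    ∀ x : EuclideanSpace ℝ (Fin 4), r ≤ ‖x‖ → ‖x‖ ≤ R →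
      u x ≤ ε * (‖x‖^2)⁻¹ + ε + σ * (R^2 - ‖x‖^2) := by
  intro x hx1 hx2
  have hSo : IsOpen {y : EuclideanSpace ℝ (Fin 4) | y ≠ 0} := isOpen_ne
  set w : EuclideanSpace ℝ (Fin 4) → ℝ :=
    fun y => u y - ε * (‖y‖^2)⁻¹ - ε + σ * (‖y‖^2 - R^2) with hw
  set A := {y : EuclideanSpace ℝ (Fin 4) | r ≤ ‖y‖ ∧ ‖y‖ ≤ R} with hA
  have hxA : x ∈ A := ⟨hx1, hx2⟩
  have hAS : A ⊆ {y : EuclideanSpace ℝ (Fin 4) | y ≠ 0} := fun y hy =>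
    norm_pos_iff.mp (lt_of_lt_of_le hr hy.1)
  have hAclosed : IsClosed A := by
    have : A = {y : EuclideanSpace ℝ (Fin 4) | r ≤ ‖y‖} ∩
        {y : EuclideanSpace ℝ (Fin 4) | ‖y‖ ≤ R} := rfl
    rw [this]
    exact (isClosed_le continuous_const continuous_norm).inter
      (isClosed_le continuous_norm continuous_const)
  have hAcomp : IsCompact A := by
    apply (isCompact_closedBall (0 : EuclideanSpace ℝ (Fin 4)) R).of_isClosed_subset hAclosed
    intro y hy
    simpa [Metric.mem_closedBall, dist_zero_right] using hy.2
  have hwcont : ContinuousOn w A := by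
    apply ContinuousOn.add
    · apply ContinuousOn.sub
      · apply ContinuousOn.sub
        · exact hs.continuousOn.mono hAS
        · exact continuousOn_const.mul (((continuous_norm.pow 2).continuousOn).inv₀
            (fun y hy => pow_ne_zero 2 (ne_of_gt (lt_of_lt_of_le hr hy.1))))
      · exact continuousOn_const
    · exact continuousOn_const.mul ((continuous_norm.pow 2).continuousOn.sub continuousOn_const)
  obtain ⟨x₀, hx₀A, hmax⟩ := hAcomp.exists_isMaxOn ⟨x, hxA⟩ hwcont
  suffices hw0 : w x₀ ≤ 0 by
    have hwx := hmax hxA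
    simp only [hw, Set.mem_setOf_eq] at hwx hw0 ⊢
    linarith
  by_cases hin : r < ‖x₀‖ ∧ ‖x₀‖ < R
  · exfalso
    obtain ⟨hin1, hin2⟩ := hin
    have hx₀S : x₀ ≠ 0 := hAS hx₀A
    have hx₀n : 0 < ‖x₀‖ := norm_pos_iff.mpr hx₀S
    set s := ‖x₀‖^2 with hsdef
    have hs0 : 0 < s := by positivity
    have hAnhds : A ∈ nhds x₀ := by
      have hUopen : IsOpen {y : EuclideanSpace ℝ (Fin 4) | r < ‖y‖ ∧ ‖y‖ < R} := by
        have : {y : EuclideanSpace ℝ (Fin 4) | r < ‖y‖ ∧ ‖y‖ < R}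
            = {y : EuclideanSpace ℝ (Fin 4) | r < ‖y‖} ∩
              {y : EuclideanSpace ℝ (Fin 4) | ‖y‖ < R} := rfl
        rw [this]
        exact (isOpen_lt continuous_const continuous_norm).inter
          (isOpen_lt continuous_norm continuous_const)
      exact Filter.mem_of_superset (hUopen.mem_nhds ⟨hin1, hin2⟩)
        (fun y hy => ⟨hy.1.le, hy.2.le⟩)
    have hlocal : IsLocalMax w x₀ := hmax.isLocalMax hAnhds
    have hud : ∀ y : EuclideanSpace ℝ (Fin 4), y ≠ 0 → DifferentiableAt ℝ u y := fun y hy =>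
      (hs.differentiableOn (by norm_num)).differentiableAt (hSo.mem_nhds hy)
    have hu'd : DifferentiableAt ℝ (fderiv ℝ u) x₀ :=
      ((ContDiffOn.fderiv_of_isOpen (m := 1) hs hSo (by norm_num)).differentiableOn (by norm_num)).differentiableAt
        (hSo.mem_nhds hx₀S)
    have key : ∀ j : Fin 4,
        fderiv ℝ (fderiv ℝ u) x₀ (EuclideanSpace.single j (1:ℝ)) (EuclideanSpace.single j (1:ℝ))
          - ε * (-2 * (s^2)⁻¹ + 8*(x₀ j)^2*(s^3)⁻¹) + σ * 2 ≤ 0 := by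
      intro j
      set v := EuclideanSpace.single j (1:ℝ) with hv
      set b := x₀ j with hbdef
      set ψ : ℝ → EuclideanSpace ℝ (Fin 4) := fun t => x₀ + t • v with hψ
      have hψ0 : ψ 0 = x₀ := by simp [hψ]
      have hψd : ∀ t, HasDerivAt ψ v t := by
        intro t
        have := ((hasDerivAt_id t).smul_const v).const_add x₀
        rw [one_smul] at this
        exact this
      set Q : ℝ → ℝ := fun t => s + 2*b*t + t^2 with hQdef
      have hQpsi : ∀ t, ‖ψ t‖^2 = Q t := by
        intro t
        simp only [hψ, hQdef, hv]
        rw [norm_line]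
      have hQd : ∀ t, HasDerivAt Q (2*b + 2*t) t := by
        intro t
        have h3 : HasDerivAt (fun t : ℝ => t^2) (2*t) t := by simpa using hasDerivAt_pow 2 t
        have h2 : HasDerivAt (fun t : ℝ => 2*b*t) (2*b) t := by
          simpa using (hasDerivAt_id t).const_mul (2*b)
        exact (h2.const_add s).add h3
      have hne : ∀ t ∈ Ioo (-‖x₀‖) ‖x₀‖, ψ t ≠ 0 := by
        intro t ht
        have h1 : ‖x₀‖ - ‖t • v‖ ≤ ‖ψ t‖ := by
          have := norm_sub_norm_le x₀ (-(t • v))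
          simpa [hψ, sub_neg_eq_add] using this
        have h2 : ‖t • v‖ = |t| := by
          rw [norm_smul, hv, EuclideanSpace.norm_single]; simp
        have h3 : |t| < ‖x₀‖ := abs_lt.mpr ⟨ht.1, ht.2⟩
        have : 0 < ‖ψ t‖ := by rw [h2] at h1; linarith
        exact norm_pos_iff.mp this
      have hQpos : ∀ t ∈ Ioo (-‖x₀‖) ‖x₀‖, 0 < Q t := by
        intro t ht
        rw [← hQpsi t]
        have : 0 < ‖ψ t‖ := norm_pos_iff.mpr (hne t ht)
        positivity
      have hu1 : ∀ t ∈ Ioo (-‖x₀‖) ‖x₀‖,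
          HasDerivAt (fun t => u (ψ t)) (fderiv ℝ u (ψ t) v) t := by
        intro t ht
        exact (hud (ψ t) (hne t ht)).hasFDerivAt.comp_hasDerivAt t (hψd t)
      have hu2 : HasDerivAt (fun t => fderiv ℝ u (ψ t) v)
          (fderiv ℝ (fderiv ℝ u) x₀ v v) 0 := by
        have h' : HasFDerivAt (fderiv ℝ u) (fderiv ℝ (fderiv ℝ u) x₀) (ψ 0) := by
          rw [hψ0]; exact hu'd.hasFDerivAt
        have hcomp : HasDerivAt (fun t => fderiv ℝ u (ψ t))
            (fderiv ℝ (fderiv ℝ u) x₀ v) 0 := h'.comp_hasDerivAt 0 (hψd 0)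
        have := hcomp.clm_apply (hasDerivAt_const 0 v)
        simpa [hψ0] using this
      have hf1 : ∀ t ∈ Ioo (-‖x₀‖) ‖x₀‖,
          HasDerivAt (fun t => (Q t)⁻¹) (-(2*b + 2*t) / (Q t)^2) t := by
        intro t ht
        exact (hQd t).inv (ne_of_gt (hQpos t ht))
      have hq2 : HasDerivAt (fun t : ℝ => 2*b + 2*t) 2 0 := by
        simpa using ((hasDerivAt_id (0:ℝ)).const_mul 2).const_add (2*b)
      have hQ0 : Q 0 = s := by simp [hQdef]
      have hf2 : HasDerivAt (fun t => -(2*b + 2*t) / (Q t)^2)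
          (-2 * (s^2)⁻¹ + 8*b^2*(s^3)⁻¹) 0 := by
        have hn : HasDerivAt (fun t : ℝ => -(2*b + 2*t)) (-2) 0 := by
          exact hq2.neg
        have hdd : HasDerivAt (fun t => (Q t)^2) (2 * Q 0 * (2*b + 2*0)) 0 := by
          have := (hQd 0).pow 2
          exact this.congr_deriv (by norm_num)
        have hd0 : (Q 0)^2 ≠ 0 := by rw [hQ0]; positivity
        have := hn.div hdd hd0
        refine this.congr_deriv ?_
        rw [hQ0]
        field_simp
        ring
      set φ : ℝ → ℝ := fun t => u (ψ t) - ε * (Q t)⁻¹ - ε + σ * (Q t - R^2) with hφdef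
      set φ' : ℝ → ℝ := fun t => fderiv ℝ u (ψ t) v - ε * (-(2*b + 2*t) / (Q t)^2)
          + σ * (2*b + 2*t) with hφ'def
      have hφd : ∀ t ∈ Ioo (-‖x₀‖) ‖x₀‖, HasDerivAt φ (φ' t) t := by
        intro t ht
        have := (((hu1 t ht).sub ((hf1 t ht).const_mul ε)).sub_const ε).add
          (((hQd t).sub_const (R^2)).const_mul σ)
        exact this
      have hΛ : HasDerivAt φ' (fderiv ℝ (fderiv ℝ u) x₀ v v
          - ε * (-2 * (s^2)⁻¹ + 8*b^2*(s^3)⁻¹) + σ * 2) 0 :=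
        (hu2.sub (hf2.const_mul ε)).add (hq2.const_mul σ)
      have hmaxφ : IsLocalMax φ 0 := by
        have hψc : Continuous ψ := by
          simp only [hψ]
          exact continuous_const.add (continuous_id.smul continuous_const)
        have htd : Filter.Tendsto ψ (nhds 0) (nhds x₀) := by
          rw [← hψ0]; exact hψc.continuousAt.tendsto
        have hev := htd.eventually hlocal
        have : ∀ᶠ t in nhds (0:ℝ), φ t ≤ φ 0 := by
          filter_upwards [hev] with t ht
          have e1 : ∀ t', φ t' = w (ψ t') := by
            intro t'
            simp only [hφdef, hw, hQpsi]
          rw [e1 t, e1 0, hψ0]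
          exact ht
        exact this
      exact secondDerivTest hx₀n hφd hΛ hmaxφ
    have e2 : ∑ j : Fin 4, (-2 * (s^2)⁻¹ + 8*(x₀ j)^2*(s^3)⁻¹) = 0 := by
      have h8 : ∀ j : Fin 4, (-2 * (s^2)⁻¹ + 8*(x₀ j)^2*(s^3)⁻¹)
          = -2*(s^2)⁻¹ + (x₀ j)^2 * (8*(s^3)⁻¹) := fun j => by ring
      have hs2 : ∑ j : Fin 4, (x₀ j)^2 * (8*(s^3)⁻¹) = s * (8*(s^3)⁻¹) := by
        rw [← Finset.sum_mul, sum_sq x₀]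
      simp_rw [h8]
      rw [Finset.sum_add_distrib, hs2, Finset.sum_const]
      simp only [Finset.card_univ, Fintype.card_fin, nsmul_eq_mul, ← hsdef]
      field_simp
      ring
    have hsum : ∑ j : Fin 4,
        (fderiv ℝ (fderiv ℝ u) x₀ (EuclideanSpace.single j (1:ℝ))
          (EuclideanSpace.single j (1:ℝ))
          - ε * (-2 * (s^2)⁻¹ + 8*(x₀ j)^2*(s^3)⁻¹) + σ * 2) ≤ 0 := by
      calc _ ≤ ∑ _j : Fin 4, (0:ℝ) := Finset.sum_le_sum (fun j _ => key j)
      _ = 0 := by simp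
    rw [Finset.sum_add_distrib, Finset.sum_sub_distrib, ← Finset.mul_sum, hh x₀ hx₀S, e2] at hsum
    simp only [Finset.sum_const, Finset.card_univ, Fintype.card_fin, nsmul_eq_mul, mul_zero] at hsum
    push_cast at hsum
    linarith
  · push_neg at hin
    rcases eq_or_lt_of_le hx₀A.1 with h1 | h1
    · have hb := hbd1 x₀ h1.symm
      have hle : ‖x₀‖^2 ≤ R^2 := by nlinarith [hx₀A.2, hr, hx₀A.1]
      have hnp : σ * (‖x₀‖^2 - R^2) ≤ 0 :=
        mul_nonpos_of_nonneg_of_nonpos hσ.le (by linarith)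
      simp only [hw]
      linarith
    · have h2 : ‖x₀‖ = R := le_antisymm hx₀A.2 (hin h1)
      have hb := hbd2 x₀ h2
      have hR : 0 < R := lt_of_lt_of_le hr hrR
      have hpos : 0 < ε * (R^2)⁻¹ := by positivity
      simp only [hw, h2]
      nlinarith



/-- **Liouville-type theorem on `ℝ⁴ ∖ {0}` for weights `δ ∈ (−2, 0)`.** A smooth harmonic
function `u` on `ℝ⁴ ∖ {0}` (the Laplacian, i.e. the trace of the Hessian in orthonormal
coordinates, vanishes) satisfying `|u(x)| ≤ C‖x‖^δ` with `−2 < δ < 0` vanishes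
identically. -/
theorem harmonic_decay_eq_zero (u : EuclideanSpace ℝ (Fin 4) → ℝ)
    (hsmooth : ContDiffOn ℝ (⊤ : ℕ∞) u {y : EuclideanSpace ℝ (Fin 4) | y ≠ 0})
    (hharm : ∀ x : EuclideanSpace ℝ (Fin 4), x ≠ 0 →
      ∑ j : Fin 4, iteratedFDerivWithin ℝ 2 u {y : EuclideanSpace ℝ (Fin 4) | y ≠ 0} x
        ![EuclideanSpace.single j (1:ℝ), EuclideanSpace.single j (1:ℝ)] = 0)
    (C : ℝ) (hC : 0 < C) (δ : ℝ) (hδ₁ : -2 < δ) (hδ₂ : δ < 0)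
    (hdecay : ∀ x : EuclideanSpace ℝ (Fin 4), x ≠ 0 → |u x| ≤ C * ‖x‖ ^ δ) :
    ∀ x : EuclideanSpace ℝ (Fin 4), x ≠ 0 → u x = 0 := by
  intro x hx
  have hSo : IsOpen {y : EuclideanSpace ℝ (Fin 4) | y ≠ 0} := isOpen_ne
  have hs2 : ContDiffOn ℝ 2 u {y : EuclideanSpace ℝ (Fin 4) | y ≠ 0} := hsmooth.of_le (WithTop.coe_le_coe.mpr le_top)
  have hh : ∀ z : EuclideanSpace ℝ (Fin 4), z ≠ 0 →
      ∑ j : Fin 4, fderiv ℝ (fderiv ℝ u) z (EuclideanSpace.single j (1:ℝ))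
        (EuclideanSpace.single j (1:ℝ)) = 0 := by
    intro z hz
    have h0 := hharm z hz
    have heq : ∀ j : Fin 4,
        iteratedFDerivWithin ℝ 2 u {y : EuclideanSpace ℝ (Fin 4) | y ≠ 0} z
          ![EuclideanSpace.single j (1:ℝ), EuclideanSpace.single j (1:ℝ)]
        = fderiv ℝ (fderiv ℝ u) z (EuclideanSpace.single j (1:ℝ))
          (EuclideanSpace.single j (1:ℝ)) := by
      intro j
      rw [iteratedFDerivWithin_of_isOpen 2 hSo hz, iteratedFDeriv_two_apply]
      simp
    rw [Finset.sum_congr rfl (fun j _ => heq j)] at h0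
    exact h0
  have hhneg : ∀ z : EuclideanSpace ℝ (Fin 4), z ≠ 0 →
      ∑ j : Fin 4, fderiv ℝ (fderiv ℝ (fun y => -u y)) z (EuclideanSpace.single j (1:ℝ))
        (EuclideanSpace.single j (1:ℝ)) = 0 := by
    intro z hz
    have e1 : fderiv ℝ (fun y => -u y) = fun y => -(fderiv ℝ u y) := by
      funext y; exact fderiv_neg
    rw [e1]
    have e2 : fderiv ℝ (fun y => -(fderiv ℝ u y)) z = -(fderiv ℝ (fderiv ℝ u) z) := fderiv_neg
    rw [e2]
    simp only [ContinuousLinearMap.neg_apply]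
    rw [Finset.sum_neg_distrib, hh z hz, neg_zero]
  have hxn : 0 < ‖x‖ := norm_pos_iff.mpr hx
  suffices claim : ∀ ε : ℝ, 0 < ε → |u x| ≤ ε * ((‖x‖^2)⁻¹ + 1) by
    by_contra habs
    have h0 : 0 < |u x| := abs_pos.mpr habs
    set K := (‖x‖^2)⁻¹ + 1 with hK
    have hKpos : 0 < K := by positivity
    have hcl := claim (|u x| / (2*K)) (div_pos h0 (by positivity))
    have : |u x| / (2*K) * K = |u x| / 2 := by field_simp
    rw [this] at hcl
    linarith
  intro ε hε
  have hδ2 : 0 < δ + 2 := by linarith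
  have hεC : 0 < ε / C := div_pos hε hC
  set r := min ‖x‖ ((ε/C) ^ ((δ+2)⁻¹)) with hrdef
  have hr : 0 < r := lt_min hxn (Real.rpow_pos_of_pos hεC _)
  set R := max ‖x‖ ((C/ε) ^ (-δ)⁻¹) with hRdef
  have hxR : ‖x‖ ≤ R := le_max_left _ _
  have hrx : r ≤ ‖x‖ := min_le_left _ _
  have hrR : r ≤ R := le_trans hrx hxR
  have hsmall : C * r ^ δ ≤ ε * (r^2)⁻¹ := by
    have h1 : r ^ (δ+2) ≤ ε / C := by
      calc r ^ (δ+2) ≤ ((ε/C) ^ ((δ+2)⁻¹)) ^ (δ+2) :=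
            Real.rpow_le_rpow hr.le (min_le_right _ _) hδ2.le
      _ = ε / C := by
            rw [← Real.rpow_mul hεC.le, inv_mul_cancel₀ (ne_of_gt hδ2), Real.rpow_one]
    have h2 : C * r ^ (δ+2) ≤ ε := by
      calc C * r ^ (δ+2) ≤ C * (ε/C) := mul_le_mul_of_nonneg_left h1 hC.le
      _ = ε := by field_simp
    have h3 : r ^ (δ + 2) = r ^ δ * r ^ (2:ℕ) := by
      rw [Real.rpow_add hr]
      congr 1
      rw [show ((2:ℝ)) = ((2:ℕ):ℝ) by norm_num, Real.rpow_natCast]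
    rw [h3] at h2
    rw [show ε * (r^2)⁻¹ = ε / r^2 by ring, le_div_iff₀ (by positivity)]
    calc C * r ^ δ * r ^ 2 = C * (r ^ δ * r ^ (2:ℕ)) := by ring
    _ ≤ ε := h2
  have hbig : C * R ^ δ ≤ ε := by
    have hCε : 0 < C/ε := div_pos hC hε
    have ht1 : (0:ℝ) < (C/ε) ^ (-δ)⁻¹ := Real.rpow_pos_of_pos hCε _
    have h1 : R ^ δ ≤ ((C/ε) ^ (-δ)⁻¹) ^ δ :=
      Real.rpow_le_rpow_of_nonpos ht1 (le_max_right _ _) hδ₂.le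
    have h2 : ((C/ε) ^ (-δ)⁻¹) ^ δ = ε / C := by
      rw [← Real.rpow_mul hCε.le, show (-δ)⁻¹ * δ = -1 by rw [inv_mul_eq_div, div_neg, div_self (ne_of_lt hδ₂)], Real.rpow_neg_one,
        inv_div]
    calc C * R ^ δ ≤ C * (ε/C) := mul_le_mul_of_nonneg_left (h1.trans h2.le) hC.le
    _ = ε := by field_simp
  have hbd1 : ∀ y : EuclideanSpace ℝ (Fin 4), ‖y‖ = r → u y ≤ ε * (‖y‖^2)⁻¹ + ε := by
    intro y hy
    have hy0 : y ≠ 0 := norm_pos_iff.mp (by rw [hy]; exact hr)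
    have hd := le_trans (le_abs_self _) (hdecay y hy0)
    rw [hy] at hd ⊢
    linarith [hsmall, hε]
  have hbd1n : ∀ y : EuclideanSpace ℝ (Fin 4), ‖y‖ = r →
      (fun y => -u y) y ≤ ε * (‖y‖^2)⁻¹ + ε := by
    intro y hy
    have hy0 : y ≠ 0 := norm_pos_iff.mp (by rw [hy]; exact hr)
    have hd : -u y ≤ C * ‖y‖ ^ δ := le_trans (neg_le_abs _) (hdecay y hy0)
    simp only []
    rw [hy] at hd ⊢
    linarith [hsmall, hε]
  have hbd2 : ∀ y : EuclideanSpace ℝ (Fin 4), ‖y‖ = R → u y ≤ ε := by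
    intro y hy
    have hy0 : y ≠ 0 := norm_pos_iff.mp (by rw [hy]; exact lt_of_lt_of_le hr hrR)
    have hd := le_trans (le_abs_self _) (hdecay y hy0)
    rw [hy] at hd
    linarith [hbig]
  have hbd2n : ∀ y : EuclideanSpace ℝ (Fin 4), ‖y‖ = R → (fun y => -u y) y ≤ ε := by
    intro y hy
    have hy0 : y ≠ 0 := norm_pos_iff.mp (by rw [hy]; exact lt_of_lt_of_le hr hrR)
    have hd : -u y ≤ C * ‖y‖ ^ δ := le_trans (neg_le_abs _) (hdecay y hy0)
    simp only []
    rw [hy] at hd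
    linarith [hbig]
  have habs : ∀ σ : ℝ, 0 < σ → |u x| ≤ ε * (‖x‖^2)⁻¹ + ε + σ * (R^2 - ‖x‖^2) := by
    intro σ hσ
    have h1 := comparison u hs2 hh r R ε σ hr hrR hε hσ hbd1 hbd2 x hrx hxR
    have h2 := comparison (fun y => -u y) hs2.neg hhneg r R ε σ hr hrR hε hσ hbd1n hbd2n x hrx hxR
    exact abs_le.mpr ⟨by linarith, h1⟩
  have hM : 0 ≤ R^2 - ‖x‖^2 := by nlinarith [hxR, hxn]
  have final : |u x| ≤ ε * (‖x‖^2)⁻¹ + ε := by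
    by_contra hcon
    push_neg at hcon
    set g := |u x| - (ε * (‖x‖^2)⁻¹ + ε) with hg
    have hgpos : 0 < g := by simp only [hg]; linarith
    have hσ0 : 0 < g / (R^2 - ‖x‖^2 + 1) := div_pos hgpos (by linarith)
    have hab := habs _ hσ0
    have hlt : g / (R^2 - ‖x‖^2 + 1) * (R^2 - ‖x‖^2) < g := by
      rw [div_mul_eq_mul_div, div_lt_iff₀ (by linarith)]
      nlinarith [hgpos, hM]
    simp only [hg] at hlt hab
    linarith
  calc |u x| ≤ ε * (‖x‖^2)⁻¹ + ε := final
  _ = ε * ((‖x‖^2)⁻¹ + 1) := by ring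
end

section
/- Let b = [[0, −1], [1, 0]] ∈ SU(2), which preserves ℤ[i]² and induces the map ([z],[w]) ↦ ([−w],[z]) on T = (ℂ/ℤ[i]) × (ℂ/ℤ[i]). Its fixed-point set on T is exactly the four points ([z],[z]) with z ∈ {0, 1/2, i/2, (1+i)/2}. -/
open Complex

/-- The Gaussian integers `ℤ[i] = {a + b·i : a, b ∈ ℤ}` as an additive subgroup (lattice)
of `ℂ`. -/
noncomputable def gaussianLattice : AddSubgroup ℂ where
  carrier := {z : ℂ | ∃ a b : ℤ, z = (a : ℂ) + (b : ℂ) * Complex.I}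
  zero_mem' := ⟨0, 0, by simp⟩
  add_mem' := by
    rintro x y ⟨a, b, rfl⟩ ⟨c, d, rfl⟩
    exact ⟨a + c, b + d, by push_cast; ring⟩
  neg_mem' := by
    rintro x ⟨a, b, rfl⟩
    exact ⟨-a, -b, by push_cast; ring⟩

/-- The class of `z : ℂ` in the torus `ℂ/ℤ[i]`. -/
noncomputable def torusMk (z : ℂ) : ℂ ⧸ gaussianLattice := QuotientAddGroup.mk z

lemma torusMk_eq {x y : ℂ} : torusMk x = torusMk y ↔ y - x ∈ gaussianLattice := by
  rw [torusMk, torusMk, QuotientAddGroup.eq, neg_add_eq_sub]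

lemma half_lattice {w : ℂ} (h : w + w ∈ gaussianLattice) :
    ∃ c ∈ ({0, 1 / 2, Complex.I / 2, (1 + Complex.I) / 2} : Set ℂ),
      w - c ∈ gaussianLattice := by
  obtain ⟨a, b, hab⟩ := h
  rcases Int.even_or_odd a with ⟨m, hm⟩ | ⟨m, hm⟩ <;>
    rcases Int.even_or_odd b with ⟨n, hn⟩ | ⟨n, hn⟩
  · refine ⟨0, by simp, m, n, ?_⟩
    have hm' : (a : ℂ) = m + m := by exact_mod_cast congrArg (Int.cast : ℤ → ℂ) hm
    have hn' : (b : ℂ) = n + n := by exact_mod_cast congrArg (Int.cast : ℤ → ℂ) hn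
    linear_combination hab / 2 + hm' / 2 + Complex.I * hn' / 2
  · refine ⟨Complex.I / 2, by simp, m, n, ?_⟩
    have hm' : (a : ℂ) = m + m := by exact_mod_cast congrArg (Int.cast : ℤ → ℂ) hm
    have hn' : (b : ℂ) = 2 * n + 1 := by exact_mod_cast congrArg (Int.cast : ℤ → ℂ) hn
    linear_combination hab / 2 + hm' / 2 + Complex.I * hn' / 2
  · refine ⟨1 / 2, by simp, m, n, ?_⟩
    have hm' : (a : ℂ) = 2 * m + 1 := by exact_mod_cast congrArg (Int.cast : ℤ → ℂ) hm
    have hn' : (b : ℂ) = n + n := by exact_mod_cast congrArg (Int.cast : ℤ → ℂ) hn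
    linear_combination hab / 2 + hm' / 2 + Complex.I * hn' / 2
  · refine ⟨(1 + Complex.I) / 2, by simp, m, n, ?_⟩
    have hm' : (a : ℂ) = 2 * m + 1 := by exact_mod_cast congrArg (Int.cast : ℤ → ℂ) hm
    have hn' : (b : ℂ) = 2 * n + 1 := by exact_mod_cast congrArg (Int.cast : ℤ → ℂ) hn
    linear_combination hab / 2 + hm' / 2 + Complex.I * hn' / 2

lemma double_c {c : ℂ} (hc : c ∈ ({0, 1 / 2, Complex.I / 2, (1 + Complex.I) / 2} : Set ℂ)) :
    c + c ∈ gaussianLattice := by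
  rcases hc with rfl | rfl | rfl | rfl
  · exact ⟨0, 0, by norm_num⟩
  · exact ⟨1, 0, by norm_num⟩
  · exact ⟨0, 1, by push_cast; ring⟩
  · exact ⟨1, 1, by push_cast; ring⟩

/-- **Fixed points of `b = [[0,−1],[1,0]]` on the 4-torus.** The matrix `b` preserves
`ℤ[i]²`, inducing `([z],[w]) ↦ ([−w],[z])` on `T = (ℂ/ℤ[i]) × (ℂ/ℤ[i])`; its fixed-point
set is exactly the four points `([z],[z])` with `z ∈ {0, 1/2, i/2, (1+i)/2}`. -/
theorem fixed_points_of_matB :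
    ((fun p : ℂ × ℂ => (-p.2, p.1)) ''
        {p : ℂ × ℂ | p.1 ∈ gaussianLattice ∧ p.2 ∈ gaussianLattice}
      = {p : ℂ × ℂ | p.1 ∈ gaussianLattice ∧ p.2 ∈ gaussianLattice}) ∧
    (∀ z w : ℂ,
      (torusMk (-w) = torusMk z ∧ torusMk z = torusMk w) ↔
      (∃ c ∈ ({0, 1 / 2, Complex.I / 2, (1 + Complex.I) / 2} : Set ℂ),
        torusMk z = torusMk c ∧ torusMk w = torusMk c)) := by
  constructor
  · ext p
    constructor
    · rintro ⟨q, ⟨hq1, hq2⟩, rfl⟩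
      exact ⟨neg_mem hq2, hq1⟩
    · rintro ⟨h1, h2⟩
      exact ⟨(p.2, -p.1), ⟨h2, neg_mem h1⟩, by simp⟩
  · intro z w
    constructor
    · rintro ⟨h1, h2⟩
      rw [torusMk_eq] at h1 h2
      have hzw : z + w ∈ gaussianLattice := by simpa [sub_neg_eq_add] using h1
      have hw2 : w + w ∈ gaussianLattice := by
        have := add_mem hzw h2
        convert this using 1; ring
      obtain ⟨c, hc, hwc⟩ := half_lattice hw2
      refine ⟨c, hc, ?_, ?_⟩
      · rw [torusMk_eq]
        have : c - z = (w - z) - (w - c) := by ring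
        rw [this]
        exact sub_mem h2 hwc
      · rw [torusMk_eq]
        have : c - w = -(w - c) := by ring
        rw [this]; exact neg_mem hwc
    · rintro ⟨c, hc, hz, hw⟩
      rw [torusMk_eq] at hz hw
      constructor
      · rw [torusMk_eq]
        have : z - -w = -(c - z) - (c - w) + (c + c) := by ring
        rw [this]
        exact add_mem (sub_mem (neg_mem hz) hw) (double_c hc)
      · rw [torusMk_eq]
        have : w - z = (c - z) - (c - w) := by ring
        rw [this]
        exact sub_mem hz hw
end
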